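/- For the Plackett-Luce distribution on k-rankings of a finite set I with scores m : I → ℝ, the derivative of the log-probability with respect to the score of an item d is: ∂/∂m(d) log π[σ] = [d ∈ σ(1:k)] − e^{m(d)} ∑_{i : i ≤ k, d ∉ σ(1:i-1)} 1/(∑_{d' ∈ I\σ(1:i-1)} e^{m(d')}), where the second sum is over positions i ∈ [k] such that d has not yet been placed before position i. -/

import Mathlib

open Finset
open scoped Classical

/-- The Plackett-Luce probability of the top-`k` ranking `σ` under scores `m`. -/
noncomputable def plProb {I : Type*} [Fintype I] {k : ℕ} (m : I → ℝ)
    (σ : Fin k ↪ I) : ℝ :=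
  ∏ i : Fin k,
    Real.exp (m (σ i)) /
      (∑ d ∈ Finset.univ.filter (fun d : I => ∀ i' : Fin k, i' < i → σ i' ≠ d),
        Real.exp (m d))

/-- the derivative of the log-probability of the Plackett-Luce model
with respect to the score of item `d₀` equals
`[d₀ ∈ σ(1:k)] − e^{m(d₀)} ∑_{i : d₀ ∉ σ(1:i-1)} 1 / ∑_{d' ∉ σ(1:i-1)} e^{m(d')}`. -/
theorem plackettLuce_log_derivative {I : Type*} [Fintype I] [DecidableEq I]
    {k : ℕ} (hk : k ≤ Fintype.card I) (m : I → ℝ) (σ : Fin k ↪ I) (d₀ : I) :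
    HasDerivAt (fun t => Real.log (plProb (Function.update m d₀ t) σ))
      ((if ∃ i : Fin k, σ i = d₀ then (1 : ℝ) else 0) -
        Real.exp (m d₀) *
          ∑ i ∈ Finset.univ.filter (fun i : Fin k => ∀ i' : Fin k, i' < i → σ i' ≠ d₀),
            1 / (∑ d' ∈ Finset.univ.filter
                (fun d : I => ∀ i' : Fin k, i' < i → σ i' ≠ d),
              Real.exp (m d')))
      (m d₀) := by
  set A : Fin k → Finset I :=
    fun i => Finset.univ.filter (fun d : I => ∀ i' : Fin k, i' < i → σ i' ≠ d) with hA
  have hmem : ∀ i : Fin k, σ i ∈ A i := by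
    intro i
    simp only [hA, mem_filter, mem_univ, true_and]
    intro i' hi' h
    exact absurd (σ.injective h) (ne_of_lt hi')
  have hSpos : ∀ (f : I → ℝ) (i : Fin k), 0 < ∑ d ∈ A i, Real.exp (f d) :=
    fun f i => Finset.sum_pos (fun d _ => Real.exp_pos _) ⟨σ i, hmem i⟩
  have hlog : ∀ t : ℝ, Real.log (plProb (Function.update m d₀ t) σ)
      = ∑ i : Fin k, (Function.update m d₀ t (σ i)
          - Real.log (∑ d ∈ A i, Real.exp (Function.update m d₀ t d))) := by
    intro t
    have hplF : plProb (Function.update m d₀ t) σ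
        = ∏ i : Fin k, Real.exp (Function.update m d₀ t (σ i))
            / ∑ d ∈ A i, Real.exp (Function.update m d₀ t d) := by
      unfold plProb
      refine Finset.prod_congr rfl fun i _ => ?_
      congr 1
      apply Finset.sum_congr _ fun _ _ => rfl
      exact Finset.filter_congr_decidable _ _ _
    rw [hplF, Real.log_prod]
    · exact Finset.sum_congr rfl fun i _ => by
        rw [Real.log_div (Real.exp_ne_zero _)
          (ne_of_gt (hSpos (Function.update m d₀ t) i)), Real.log_exp]
    · intro i _
      exact ne_of_gt (div_pos (Real.exp_pos _) (hSpos (Function.update m d₀ t) i))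
  simp only [hlog]
  have key : ∀ i : Fin k, HasDerivAt
      (fun t => Function.update m d₀ t (σ i)
          - Real.log (∑ d ∈ A i, Real.exp (Function.update m d₀ t d)))
      ((if σ i = d₀ then (1 : ℝ) else 0)
        - (if d₀ ∈ A i then Real.exp (m d₀) / (∑ d ∈ A i, Real.exp (m d)) else 0))
      (m d₀) := by
    intro i
    have h1 : HasDerivAt (fun t => Function.update m d₀ t (σ i))
        (if σ i = d₀ then (1 : ℝ) else 0) (m d₀) := by
      by_cases h : σ i = d₀
      · have hfe : (fun t => Function.update m d₀ t (σ i)) = fun t => t := by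
          funext t; rw [h, Function.update_self]
        rw [hfe, if_pos h]
        exact hasDerivAt_id _
      · have hfe : (fun t => Function.update m d₀ t (σ i)) = fun _ => m (σ i) := by
          funext t; rw [Function.update_of_ne h]
        rw [hfe, if_neg h]
        exact hasDerivAt_const _ _
    have h2 : HasDerivAt (fun t => Real.log (∑ d ∈ A i, Real.exp (Function.update m d₀ t d)))
        (if d₀ ∈ A i then Real.exp (m d₀) / (∑ d ∈ A i, Real.exp (m d)) else 0) (m d₀) := by
      by_cases hd : d₀ ∈ A i
      · have hrw : ∀ t : ℝ, (∑ d ∈ A i, Real.exp (Function.update m d₀ t d))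
            = Real.exp t + ∑ d ∈ (A i).erase d₀, Real.exp (m d) := by
          intro t
          rw [← Finset.add_sum_erase _ _ hd, Function.update_self]
          congr 1
          exact Finset.sum_congr rfl fun d hdm =>
            by rw [Function.update_of_ne (Finset.ne_of_mem_erase hdm)]
        simp only [hrw]
        have hsum : (∑ d ∈ A i, Real.exp (m d))
            = Real.exp (m d₀) + ∑ d ∈ (A i).erase d₀, Real.exp (m d) := by
          have := hrw (m d₀); simpa [Function.update_eq_self] using this
        rw [if_pos hd, hsum]
        have hg : HasDerivAt (fun t => Real.exp t + ∑ d ∈ (A i).erase d₀, Real.exp (m d))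
            (Real.exp (m d₀)) (m d₀) := (Real.hasDerivAt_exp _).add_const _
        have hne : Real.exp (m d₀) + ∑ d ∈ (A i).erase d₀, Real.exp (m d) ≠ 0 := by
          have : (0:ℝ) < Real.exp (m d₀) + ∑ d ∈ (A i).erase d₀, Real.exp (m d) := by
            have := hSpos m i; rw [hsum] at this; exact this
          exact ne_of_gt this
        exact hg.log hne
      · have hrw : ∀ t : ℝ, (∑ d ∈ A i, Real.exp (Function.update m d₀ t d))
            = ∑ d ∈ A i, Real.exp (m d) := by
          intro t
          exact Finset.sum_congr rfl fun d hdm =>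
            by rw [Function.update_of_ne (fun h => hd (by rwa [h] at hdm))]
        simp only [hrw, if_neg hd]
        exact hasDerivAt_const _ _
    exact h1.sub h2
  have hsum := HasDerivAt.fun_sum (fun i (_ : i ∈ Finset.univ) => key i)
  convert hsum using 1
  case e'_4 => rfl
  case e'_5 => rfl
  rw [Finset.sum_sub_distrib]
  congr 1
  · by_cases hex : ∃ i : Fin k, σ i = d₀
    · obtain ⟨i₀, hi₀⟩ := hex
      rw [if_pos ⟨i₀, hi₀⟩, Finset.sum_eq_single i₀]
      · rw [if_pos hi₀]
      · intro j _ hj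
        rw [if_neg]
        intro h
        exact hj (σ.injective (h.trans hi₀.symm))
      · intro h; exact absurd (Finset.mem_univ i₀) h
    · rw [if_neg hex]
      symm
      exact Finset.sum_eq_zero fun i _ => if_neg (fun h => hex ⟨i, h⟩)
  · rw [Finset.mul_sum, ← Finset.sum_filter]
    refine Finset.sum_congr ?_ fun i hi => ?_
    · apply Finset.filter_congr
      intro i _
      simp [hA, mem_filter]
    · rw [mul_one_div]
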